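/- The set {Sym(X^(α)) : |α| = m} of symmetrized monomials of degree m forms a basis of the space ℛ^m of homogeneous regular polynomials of degree m in the free associative algebra on X₁,…,Xₙ over a field of characteristic zero. -/

import Mathlib

open scoped BigOperators

noncomputable section

/-- The word `X₁^{α₁} ⋯ Xₙ^{αₙ}` as a list of generator indices. -/
def word (n : ℕ) (α : Fin n → ℕ) : List (Fin n) :=
  (List.finRange n).flatMap fun i => List.replicate (α i) i

/-- The symmetrization `symz(X^(α)) = (1/m!) ∑_{σ ∈ Σₘ} X'_{σ(1)} ⋯ X'_{σ(m)}`
of the monomial `X^(α)` in the free associative algebra. -/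
def symz (K : Type) [Field K] (n : ℕ) (α : Fin n → ℕ) : FreeAlgebra K (Fin n) :=
  ((Nat.factorial (word n α).length : K))⁻¹ •
    ∑ σ : Equiv.Perm (Fin (word n α).length),
      (List.ofFn fun j => FreeAlgebra.ι K ((word n α).get (σ j))).prod

/-- Regular homogeneous polynomials of degree `m`: the span of `m`-th powers of
linear forms in the generators. -/
def RegHom (K : Type) [Field K] (n m : ℕ) : Submodule K (FreeAlgebra K (Fin n)) :=
  Submodule.span K {x | ∃ c : Fin n → K, x = (∑ i, c i • FreeAlgebra.ι K i) ^ m}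

/-- Regular polynomials: the span of all powers of linear forms in the generators. -/
def Reg (K : Type) [Field K] (n : ℕ) : Submodule K (FreeAlgebra K (Fin n)) :=
  Submodule.span K {x | ∃ (m : ℕ) (c : Fin n → K), x = (∑ i, c i • FreeAlgebra.ι K i) ^ m}

/-- The symmetrization map `Φ` from commutative polynomials to the free algebra,
sending `x^(α)` to `symz(X^(α))` and extended linearly. -/
def Phi (K : Type) [Field K] (n : ℕ) (p : MvPolynomial (Fin n) K) : FreeAlgebra K (Fin n) :=
  ∑ d ∈ p.support, p.coeff d • symz K n (fun i => d i)

/-!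
For a word `g : Fin m → Fin n` let `symSum g = ∑_σ X_{g (σ 1)} ⋯ X_{g (σ m)}`; then
`symz α = symSum g / m!` for every word `g` with exponent vector `α`. The polarization identity
`∑_σ v_{σ 1} ⋯ v_{σ m} = ∑_U (-1)^|U| (∑_{i ∉ U} v_i)^m`, an inclusion–exclusion over the images
of the maps `Fin m → Fin m`, puts every `symSum g` in `ℛ^m`. Conversely, expanding `(∑ c_i X_i)^m`
over words and averaging over permutations of the positions writes it as
`∑_g (∏_j c_{g j}) symz (multidegree g)`. Linear independence is seen in the commutative polynomial
ring, where `symz α` becomes the monomial `x^α`.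
-/

open Finset

section Polarization

variable {A : Type*}

theorem sum_pow_eq_sum_list_prod_ofFn [Semiring A] {ι : Type*} [Fintype ι] [DecidableEq ι]
    (v : ι → A) (m : ℕ) : (∑ i, v i) ^ m = ∑ f : Fin m → ι, (List.ofFn fun j ↦ v (f j)).prod := by
  simpa [List.ofFn_const] using
    (MultilinearMap.mkPiAlgebraFin ℕ m A).map_sum fun _ ↦ v

theorem sum_ite_forall_notMem_neg_one_pow_card {α ι : Type*} [Fintype α] [Fintype ι]
    [DecidableEq ι] (f : α → ι) :
    ∑ U : Finset ι, (if ∀ a, f a ∉ U then (-1 : ℤ) ^ #U else 0)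
      = if Function.Surjective f then 1 else 0 := by
  have hU : ∀ U : Finset ι, (∀ a, f a ∉ U) ↔ U ∈ (univ.image f)ᶜ.powerset := by
    simpa [subset_compl_iff_disjoint_right, disjoint_left] using
      fun U ↦ ⟨fun h a ha x hx ↦ h x (hx ▸ ha), fun h a ha ↦ h ha a rfl⟩
  have hsurj : Function.Surjective f ↔ (univ.image f)ᶜ = ∅ := by
    simp [compl_eq_empty_iff, eq_univ_iff_forall, Function.Surjective]
  simp_rw [hU, ← sum_filter, filter_mem_eq_inter, univ_inter, sum_powerset_neg_one_pow_card,
    hsurj]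

theorem sum_perm_list_prod_ofFn_eq_sum_neg_one_pow [Ring A] {m : ℕ} (v : Fin m → A) :
    ∑ σ : Equiv.Perm (Fin m), (List.ofFn fun j ↦ v (σ j)).prod
      = ∑ U : Finset (Fin m), (-1 : ℤ) ^ #U • (∑ i ∈ Uᶜ, v i) ^ m := by
  have hpow (U : Finset (Fin m)) : (∑ i ∈ Uᶜ, v i) ^ m
      = ∑ f : Fin m → Fin m, if ∀ j, f j ∉ U then (List.ofFn fun j ↦ v (f j)).prod else 0 := by
    have hsum : ∑ i ∈ Uᶜ, v i = ∑ i, if i ∉ U then v i else 0 := by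
      rw [← sum_filter]; congr; ext; simp
    rw [hsum, sum_pow_eq_sum_list_prod_ofFn]
    refine sum_congr rfl fun f _ ↦ ?_
    split_ifs with hf
    · simp [hf]
    · obtain ⟨j, hj⟩ := not_forall_not.mp hf
      exact List.prod_eq_zero (List.mem_ofFn.2 ⟨j, by simp [hj]⟩)
  have hperm : ∑ σ : Equiv.Perm (Fin m), (List.ofFn fun j ↦ v (σ j)).prod
      = ∑ f : Fin m → Fin m, if f.Surjective then (List.ofFn fun j ↦ v (f j)).prod else 0 := by
    calc _ = ∑ f : {f : Fin m → Fin m // f.Bijective}, (List.ofFn fun j ↦ v (f.1 j)).prod :=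
          (Equiv.sum_comp Equiv.bijectiveEquiv _).symm
      _ = ∑ f ∈ univ.filter fun f : Fin m → Fin m ↦ f.Surjective,
            (List.ofFn fun j ↦ v (f j)).prod :=
          (sum_subtype _ (p := Function.Bijective)
            (fun f ↦ by simp [Finite.surjective_iff_bijective])
            fun f ↦ (List.ofFn fun j ↦ v (f j)).prod).symm
      _ = _ := sum_filter _ _
  simp_rw [hperm, hpow, smul_sum, smul_ite, smul_zero]
  rw [sum_comm]
  refine sum_congr rfl fun f _ ↦ ?_
  simpa [sum_smul, ite_smul] using
    congrArg (· • (List.ofFn fun j ↦ v (f j)).prod) (sum_ite_forall_notMem_neg_one_pow_card f).symm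

end Polarization

section Multidegree

variable {n : ℕ} {ι κ : Type*} [Fintype ι] [Fintype κ]

def multidegree (g : ι → Fin n) (x : Fin n) : ℕ := #{j | g j = x}

theorem multidegree_comp_equiv (g : κ → Fin n) (e : ι ≃ κ) :
    multidegree (g ∘ e) = multidegree g := by
  funext x
  exact card_equiv e (by simp)

theorem sum_multidegree (g : ι → Fin n) : ∑ x, multidegree g x = Fintype.card ι := by
  simpa [multidegree] using (card_eq_sum_card_fiberwise (f := g) (s := univ) (t := univ)
    fun _ _ ↦ mem_univ _).symm

theorem exists_perm_eq_comp_of_multidegree_eq {g g' : ι → Fin n}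
    (h : multidegree g = multidegree g') : ∃ π : Equiv.Perm ι, g' = g ∘ π := by
  have e (x : Fin n) : {j // g' j = x} ≃ {j // g j = x} :=
    Fintype.equivOfCardEq (by simpa [multidegree, Fintype.card_subtype] using (congrFun h x).symm)
  refine ⟨(Equiv.sigmaFiberEquiv g').symm.trans
    ((Equiv.sigmaCongrRight e).trans (Equiv.sigmaFiberEquiv g)), funext fun j ↦ ?_⟩
  exact ((e (g' j)) ⟨j, rfl⟩).2.symm

theorem prod_comp_eq_prod_pow_multidegree {M : Type*} [CommMonoid M]
    (f : Fin n → M) (g : ι → Fin n) : ∏ j, f (g j) = ∏ x, f x ^ multidegree g x := by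
  simp_rw [multidegree, ← prod_const]
  exact (prod_fiberwise' univ g f).symm

theorem length_word (α : Fin n → ℕ) : (word n α).length = ∑ i, α i := by
  simp [word, List.length_flatMap, ← Fin.sum_univ_def]

theorem multidegree_word_get (α : Fin n → ℕ) : multidegree (word n α).get = α := by
  funext x
  refine (Fin.card_filter_univ_eq_vector_get_eq_count x ⟨word n α, rfl⟩).trans ?_
  simp [word, List.count_flatMap, List.count_replicate, ← Fin.sum_univ_def]

theorem exists_multidegree_eq {m : ℕ} {α : Fin n → ℕ} (h : ∑ i, α i = m) :
    ∃ g : Fin m → Fin n, multidegree g = α := by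
  have hw : (word n α).length = m := (length_word α).trans h
  exact ⟨(word n α).get ∘ finCongr hw.symm, by
    rw [multidegree_comp_equiv, multidegree_word_get]⟩

end Multidegree

section Symmetrization

open scoped Nat

variable (K : Type) [Field K] {n m : ℕ}

def symSum (g : Fin m → Fin n) : FreeAlgebra K (Fin n) :=
  ∑ σ : Equiv.Perm (Fin m), (List.ofFn fun j ↦ FreeAlgebra.ι K (g (σ j))).prod

theorem symSum_comp_perm (g : Fin m → Fin n) (π : Equiv.Perm (Fin m)) :
    symSum K (g ∘ π) = symSum K g :=
  Fintype.sum_bijective (π * ·) (Group.mulLeft_bijective π) _ _ fun _ ↦ rfl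

theorem symSum_eq_of_multidegree_eq {g g' : Fin m → Fin n}
    (h : multidegree g = multidegree g') : symSum K g = symSum K g' := by
  obtain ⟨π, rfl⟩ := exists_perm_eq_comp_of_multidegree_eq h
  exact (symSum_comp_perm K g π).symm

theorem symz_eq_inv_factorial_smul_symSum (α : Fin n → ℕ) (h : (word n α).length = m) :
    symz K n α = (m ! : K)⁻¹ • symSum K ((word n α).get ∘ finCongr h.symm) := by
  subst h
  rfl

theorem symz_multidegree (g : Fin m → Fin n) :
    symz K n (multidegree g) = (m ! : K)⁻¹ • symSum K g := by
  have hw : (word n (multidegree g)).length = m := by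
    rw [length_word, sum_multidegree, Fintype.card_fin]
  rw [symz_eq_inv_factorial_smul_symSum K _ hw]
  congr 1
  apply symSum_eq_of_multidegree_eq
  rw [multidegree_comp_equiv, multidegree_word_get]

theorem pow_mem_RegHom {ℓ : FreeAlgebra K (Fin n)}
    (hℓ : ℓ ∈ Submodule.span K (Set.range (FreeAlgebra.ι K))) : ℓ ^ m ∈ RegHom K n m := by
  obtain ⟨c, rfl⟩ := (Submodule.mem_span_range_iff_exists_fun K).1 hℓ
  exact Submodule.subset_span ⟨c, rfl⟩

theorem symSum_mem_RegHom (g : Fin m → Fin n) : symSum K g ∈ RegHom K n m := by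
  rw [symSum, sum_perm_list_prod_ofFn_eq_sum_neg_one_pow fun i ↦ FreeAlgebra.ι K (g i)]
  refine Submodule.sum_mem _ fun U _ ↦ zsmul_mem (pow_mem_RegHom K ?_) _
  exact Submodule.sum_mem _ fun i _ ↦ Submodule.subset_span ⟨g i, rfl⟩

theorem symz_mem_RegHom {α : Fin n → ℕ} (h : ∑ i, α i = m) : symz K n α ∈ RegHom K n m := by
  obtain ⟨g, rfl⟩ := exists_multidegree_eq h
  rw [symz_multidegree]
  exact Submodule.smul_mem _ _ (symSum_mem_RegHom K g)

theorem pow_mem_span_symz [CharZero K] (c : Fin n → K) :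
    (∑ i, c i • FreeAlgebra.ι K i) ^ m ∈
      Submodule.span K (Set.range fun α : {α : Fin n → ℕ // ∑ i, α i = m} ↦ symz K n α.1) := by
  set P := (∑ i, c i • FreeAlgebra.ι K i) ^ m
  -- The coefficient `∏ j, c (f j)` of the word `f` does not change when its letters are permuted.
  have hexp (σ : Equiv.Perm (Fin m)) : P = ∑ f : Fin m → Fin n,
      (∏ j, c (f j)) • (List.ofFn fun j ↦ FreeAlgebra.ι K (f (σ j))).prod := by
    have hexpand := (MultilinearMap.mkPiAlgebraFin K m _).map_sum fun _ i ↦ c i • FreeAlgebra.ι K i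
    simp only [MultilinearMap.map_smul_univ, MultilinearMap.mkPiAlgebraFin_apply,
      List.ofFn_const, List.prod_replicate] at hexpand
    refine hexpand.trans ?_
    rw [← Equiv.sum_comp ((σ.arrowCongr (Equiv.refl (Fin n))).symm)]
    refine sum_congr rfl fun f _ ↦ ?_
    simp only [Equiv.arrowCongr_symm, Equiv.refl_symm, Equiv.arrowCongr_apply, Equiv.coe_refl,
      Equiv.symm_symm, Function.comp_apply, id_eq, Equiv.prod_comp σ fun j ↦ c (f j)]
  have hsym : (m ! : K) • P = ∑ f : Fin m → Fin n, (∏ j, c (f j)) • symSum K f := by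
    calc (m ! : K) • P = ∑ _σ : Equiv.Perm (Fin m), P := by
          rw [sum_const, card_univ, Fintype.card_perm, Fintype.card_fin, Nat.cast_smul_eq_nsmul]
      _ = _ := by
        rw [sum_congr rfl fun σ _ ↦ hexp σ, sum_comm]
        simp only [← smul_sum, symSum]
  have hP : P = ∑ f : Fin m → Fin n, (∏ j, c (f j)) • symz K n (multidegree f) := by
    calc P = (m ! : K)⁻¹ • ((m ! : K) • P) :=
          (inv_smul_smul₀ (Nat.cast_ne_zero.2 m.factorial_ne_zero) P).symm
      _ = _ := by
        rw [hsym, smul_sum]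
        exact sum_congr rfl fun f _ ↦ by rw [symz_multidegree, smul_comm]
  rw [hP]
  refine Submodule.sum_mem _ fun f _ ↦ Submodule.smul_mem _ _ (Submodule.subset_span ?_)
  exact ⟨⟨multidegree f, by rw [sum_multidegree, Fintype.card_fin]⟩, rfl⟩

end Symmetrization

section Abelianization

variable (K : Type) [Field K] {n m : ℕ}

def abelianization (n : ℕ) : FreeAlgebra K (Fin n) →ₐ[K] MvPolynomial (Fin n) K :=
  FreeAlgebra.lift K MvPolynomial.X

theorem abelianization_list_prod_ofFn (g : Fin m → Fin n) :
    abelianization K n (List.ofFn fun j ↦ FreeAlgebra.ι K (g j)).prod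
      = MvPolynomial.monomial (Finsupp.equivFunOnFinite.symm (multidegree g)) 1 := by
  rw [abelianization, map_list_prod, List.map_ofFn, List.prod_ofFn, MvPolynomial.monomial_eq,
    map_one, one_mul, Finsupp.prod_fintype _ _ fun _ ↦ pow_zero _]
  simpa using prod_comp_eq_prod_pow_multidegree MvPolynomial.X g

theorem abelianization_symz [CharZero K] {α : Fin n → ℕ} (h : ∑ i, α i = m) :
    abelianization K n (symz K n α)
      = MvPolynomial.monomial (Finsupp.equivFunOnFinite.symm α) 1 := by
  obtain ⟨g, rfl⟩ := exists_multidegree_eq h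
  have hσ (σ : Equiv.Perm (Fin m)) :
      abelianization K n (List.ofFn fun j ↦ FreeAlgebra.ι K (g (σ j))).prod
        = MvPolynomial.monomial (Finsupp.equivFunOnFinite.symm (multidegree g)) 1 := by
    rw [← multidegree_comp_equiv g σ]
    exact abelianization_list_prod_ofFn K (g ∘ σ)
  rw [symz_multidegree, map_smul, symSum, map_sum, sum_congr rfl fun σ _ ↦ hσ σ, sum_const,
    card_univ, Fintype.card_perm, Fintype.card_fin, ← Nat.cast_smul_eq_nsmul K,
    inv_smul_smul₀ (Nat.cast_ne_zero.2 m.factorial_ne_zero)]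

theorem linearIndependent_symz [CharZero K] :
    LinearIndependent K (fun α : {α : Fin n → ℕ // ∑ i, α i = m} ↦ symz K n α.1) := by
  refine LinearIndependent.of_comp (abelianization K n).toLinearMap ?_
  have hinj : Function.Injective fun α : {α : Fin n → ℕ // ∑ i, α i = m} ↦
      Finsupp.equivFunOnFinite.symm α.1 :=
    Finsupp.equivFunOnFinite.symm.injective.comp Subtype.val_injective
  have hcomp : (abelianization K n).toLinearMap ∘ (fun α : {α // ∑ i, α i = m} ↦ symz K n α.1)
      = MvPolynomial.basisMonomials (Fin n) K ∘ fun α ↦ Finsupp.equivFunOnFinite.symm α.1 :=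
    funext fun α ↦ by simp [abelianization_symz K α.2]
  rw [hcomp]
  exact (MvPolynomial.basisMonomials (Fin n) K).linearIndependent.comp _ hinj

end Abelianization

theorem symmetrized_monomials_basis_of_RegHom (K : Type) [Field K] [CharZero K]
    (n m : ℕ) :
    LinearIndependent K
        (fun α : {α : Fin n → ℕ // ∑ i, α i = m} => symz K n α.1) ∧
      Submodule.span K
          (Set.range fun α : {α : Fin n → ℕ // ∑ i, α i = m} => symz K n α.1)
        = RegHom K n m := by
  refine ⟨linearIndependent_symz K, le_antisymm ?_ ?_⟩
  · rw [Submodule.span_le]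
    rintro _ ⟨α, rfl⟩
    exact symz_mem_RegHom K α.2
  · rw [RegHom, Submodule.span_le]
    rintro _ ⟨c, rfl⟩
    exact pow_mem_span_symz K c

end
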